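/- Let n ≥ 2 and let f be a smooth strictly convex function on an open domain Ω ⊆ ℝⁿ. Then at every point of Ω the scalar curvature R of the Calabi metric G satisfies R = n(n−1)J − n²|T|², where J is the relative Pick invariant and T is the Tchebychev vector field. -/

import Mathlib

open scoped BigOperators
open Real Set

noncomputable section

/-- The partial derivative `∂g/∂x_i`. -/
def pd {n : ℕ} (i : Fin n) (g : (Fin n → ℝ) → ℝ) : (Fin n → ℝ) → ℝ :=
  fun x => fderiv ℝ g x (Pi.single i 1)

/-- The Hessian matrix `(f_{ij}) = (∂²f/∂x_i∂x_j)`. -/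
def hessMat {n : ℕ} (f : (Fin n → ℝ) → ℝ) (x : Fin n → ℝ) : Matrix (Fin n) (Fin n) ℝ :=
  Matrix.of fun i j => pd i (pd j f) x

/-- The inverse Hessian matrix `(f^{ij})`. -/
def hessInv {n : ℕ} (f : (Fin n → ℝ) → ℝ) (x : Fin n → ℝ) : Matrix (Fin n) (Fin n) ℝ :=
  (hessMat f x)⁻¹

/-- Third partial derivatives `f_{ijk}`. -/
def f3 {n : ℕ} (f : (Fin n → ℝ) → ℝ) (i j k : Fin n) : (Fin n → ℝ) → ℝ :=
  pd i (pd j (pd k f))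

/-- Christoffel symbols `Γ^k_{ij} = (1/2) Σ_l f^{kl} f_{ijl}` of the Calabi metric. -/
def Gamma {n : ℕ} (f : (Fin n → ℝ) → ℝ) (k i j : Fin n) : (Fin n → ℝ) → ℝ :=
  fun x => (1 / 2) * ∑ l, hessInv f x k l * f3 f i j l x

/-- The Fubini–Pick (cubic) form components `A_{ijk} = -(1/2) f_{ijk}`. -/
def FP {n : ℕ} (f : (Fin n → ℝ) → ℝ) (i j k : Fin n) : (Fin n → ℝ) → ℝ :=
  fun x => -(1 / 2) * f3 f i j k x

/-- The covariant derivative `A_{ijk,l}` of the Fubini–Pick form. -/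
def FPcov {n : ℕ} (f : (Fin n → ℝ) → ℝ) (i j k l : Fin n) : (Fin n → ℝ) → ℝ :=
  fun x => pd l (FP f i j k) x -
    ∑ m, (Gamma f m l i x * FP f m j k x + Gamma f m l j x * FP f i m k x +
      Gamma f m l k x * FP f i j m x)

/-- The Fubini–Pick form is parallel on `Ω`: `A_{ijk,l} = 0` identically. -/
def ParallelFP {n : ℕ} (f : (Fin n → ℝ) → ℝ) (Ω : Set (Fin n → ℝ)) : Prop :=
  ∀ i j k l : Fin n, ∀ x ∈ Ω, FPcov f i j k l x = 0

/-- The Riemann curvature tensor `R^l_{kij}` of the Calabi metric. -/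
def RiemUp {n : ℕ} (f : (Fin n → ℝ) → ℝ) (l k i j : Fin n) : (Fin n → ℝ) → ℝ :=
  fun x => pd i (Gamma f l j k) x - pd j (Gamma f l i k) x +
    ∑ m, (Gamma f l i m x * Gamma f m j k x - Gamma f l j m x * Gamma f m i k x)

/-- The Riemann curvature tensor with lowered indices `R_{ijkl} = Σ_m f_{lm} R^m_{kij}`. -/
def Riem {n : ℕ} (f : (Fin n → ℝ) → ℝ) (i j k l : Fin n) : (Fin n → ℝ) → ℝ :=
  fun x => ∑ m, hessMat f x l m * RiemUp f m k i j x

/-- The Calabi metric is flat on `Ω`. -/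
def FlatCalabi {n : ℕ} (f : (Fin n → ℝ) → ℝ) (Ω : Set (Fin n → ℝ)) : Prop :=
  ∀ i j k l : Fin n, ∀ x ∈ Ω, Riem f i j k l x = 0

/-- The Ricci tensor `R_{jk} = Σ_i R^i_{kij}` of the Calabi metric. -/
def RicciC {n : ℕ} (f : (Fin n → ℝ) → ℝ) (j k : Fin n) : (Fin n → ℝ) → ℝ :=
  fun x => ∑ i, RiemUp f i k i j x

/-- The scalar curvature `R = Σ f^{jk} R_{jk}` of the Calabi metric. -/
def ScalC {n : ℕ} (f : (Fin n → ℝ) → ℝ) : (Fin n → ℝ) → ℝ :=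
  fun x => ∑ j, ∑ k, hessInv f x j k * RicciC f j k x

/-- The inner product `G_p(u,v) = Σ f_{ij}(p) u_i v_j`. -/
def Gp {n : ℕ} (f : (Fin n → ℝ) → ℝ) (p u v : Fin n → ℝ) : ℝ :=
  ∑ i, ∑ j, hessMat f p i j * u i * v j

/-- The symmetric trilinear form `A_p(u,v,w) = Σ A_{ijk}(p) u_i v_j w_k`. -/
def Ap {n : ℕ} (f : (Fin n → ℝ) → ℝ) (p u v w : Fin n → ℝ) : ℝ :=
  ∑ i, ∑ j, ∑ k, FP f i j k p * u i * v j * w k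

/-- The graph of `f` over `Ω` is Calabi affine equivalent to an open part of the graph of
`g` over `D`: there are an invertible affine transformation `φ` of `ℝⁿ` with `φ(Ω) ⊆ D`
and constants `a₁,…,aₙ,b` with `g(φ(x)) = f(x) + Σ aⱼ xⱼ + b` on `Ω`. -/
def CalabiEquivOpenPart {n : ℕ} (f : (Fin n → ℝ) → ℝ) (Ω : Set (Fin n → ℝ))
    (g : (Fin n → ℝ) → ℝ) (D : Set (Fin n → ℝ)) : Prop :=
  ∃ φ : (Fin n → ℝ) ≃ᵃ[ℝ] (Fin n → ℝ), ∃ a : Fin n → ℝ, ∃ b : ℝ,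
    φ '' Ω ⊆ D ∧ ∀ x ∈ Ω, g (φ x) = f x + (∑ j, a j * x j) + b

/-- The function `Q(c₁,…,c_r;n)(x) = -Σ_{i<r} cᵢ ln xᵢ + (1/2) Σ_{j≥r} xⱼ²`
(indices written 0-based). -/
def Qfun (n r : ℕ) (c : Fin n → ℝ) : (Fin n → ℝ) → ℝ :=
  fun x => -(∑ i : Fin n, if (i : ℕ) < r then c i * Real.log (x i) else 0) +
    (1 / 2) * ∑ j : Fin n, if r ≤ (j : ℕ) then (x j) ^ 2 else 0

/-- The domain of `Q(c₁,…,c_r;n)`: the first `r` coordinates are positive. -/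
def Qdom (n r : ℕ) : Set (Fin n → ℝ) := {x | ∀ i : Fin n, (i : ℕ) < r → 0 < x i}

/-- The elliptic paraboloid is the graph of `(1/2) Σ xⱼ²`. -/
def paraboloid (n : ℕ) : (Fin n → ℝ) → ℝ := fun x => (1 / 2) * ∑ j, (x j) ^ 2


/-- The Tchebychev vector field components `T^l = -(1/(2n)) Σ f^{kl} f^{ij} f_{ijk}`. -/
def Tcheb {n : ℕ} (f : (Fin n → ℝ) → ℝ) (l : Fin n) : (Fin n → ℝ) → ℝ :=
  fun x => -(1 / (2 * (n : ℝ))) *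
    ∑ k, ∑ i, ∑ j, hessInv f x k l * hessInv f x i j * f3 f i j k x

/-- The squared length `|T|² = Σ f_{kl} T^k T^l` of the Tchebychev vector field. -/
def TnormSq {n : ℕ} (f : (Fin n → ℝ) → ℝ) : (Fin n → ℝ) → ℝ :=
  fun x => ∑ k, ∑ l, hessMat f x k l * Tcheb f k x * Tcheb f l x

/-- The relative Pick invariant
`J = (1/(4n(n-1))) Σ f^{il} f^{jp} f^{kq} f_{ijk} f_{lpq}`. -/
def PickJ {n : ℕ} (f : (Fin n → ℝ) → ℝ) : (Fin n → ℝ) → ℝ :=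
  fun x => (1 / (4 * (n : ℝ) * ((n : ℝ) - 1))) *
    ∑ i, ∑ l, ∑ j, ∑ p, ∑ k, ∑ q,
      hessInv f x i l * hessInv f x j p * hessInv f x k q * f3 f i j k x * f3 f l p q x

open Matrix

variable {n : ℕ} {g h : (Fin n → ℝ) → ℝ} {x : Fin n → ℝ} {i : Fin n}

lemma pd_congr_nhds (H : g =ᶠ[nhds x] h) : pd i g x = pd i h x := by
  unfold pd; rw [Filter.EventuallyEq.fderiv_eq H]

lemma pd_mul (hg : DifferentiableAt ℝ g x) (hh : DifferentiableAt ℝ h x) :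
    pd i (fun y => g y * h y) x = pd i g x * h x + g x * pd i h x := by
  unfold pd
  rw [fderiv_fun_mul hg hh]
  simp [add_comm, mul_comm]

lemma pd_sum {ι : Type*} (s : Finset ι) (g : ι → (Fin n → ℝ) → ℝ)
    (hg : ∀ a ∈ s, DifferentiableAt ℝ (g a) x) :
    pd i (fun y => ∑ a ∈ s, g a y) x = ∑ a ∈ s, pd i (g a) x := by
  unfold pd
  rw [fderiv_fun_sum hg]
  simp

lemma pd_const_mul (c : ℝ) (hg : DifferentiableAt ℝ g x) :
    pd i (fun y => c * g y) x = c * pd i g x := by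
  unfold pd; rw [fderiv_const_mul hg]; simp

lemma contDiffOn_pd {Ω : Set (Fin n → ℝ)} (hΩo : IsOpen Ω) (hg : ContDiffOn ℝ (⊤ : ℕ∞) g Ω) :
    ContDiffOn ℝ (⊤ : ℕ∞) (pd i g) Ω := by
  have h1 : ContDiffOn ℝ (⊤ : ℕ∞) (fderiv ℝ g) Ω := hg.fderiv_of_isOpen hΩo (by simp)
  exact h1.clm_apply contDiffOn_const

lemma differentiableAt_of_contDiffOn {Ω : Set (Fin n → ℝ)} (hΩo : IsOpen Ω)
    (hg : ContDiffOn ℝ (⊤ : ℕ∞) g Ω) (hx : x ∈ Ω) : DifferentiableAt ℝ g x :=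
  (hg.contDiffAt (hΩo.mem_nhds hx)).differentiableAt (by simp)

lemma pd_comm {Ω : Set (Fin n → ℝ)} (hΩo : IsOpen Ω) (hg : ContDiffOn ℝ (⊤ : ℕ∞) g Ω)
    (hx : x ∈ Ω) (i j : Fin n) : pd i (pd j g) x = pd j (pd i g) x := by
  have hD : ContDiffOn ℝ (⊤ : ℕ∞) (fderiv ℝ g) Ω := hg.fderiv_of_isOpen hΩo (by simp)
  have hDx : DifferentiableAt ℝ (fderiv ℝ g) x :=
    (hD.contDiffAt (hΩo.mem_nhds hx)).differentiableAt (by simp)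
  have hev : ∀ᶠ y in nhds x, HasFDerivAt g (fderiv ℝ g y) y := by
    filter_upwards [hΩo.mem_nhds hx] with y hy using
      (differentiableAt_of_contDiffOn hΩo hg hy).hasFDerivAt
  have hsymm := second_derivative_symmetric_of_eventually hev hDx.hasFDerivAt
  have key : ∀ a b : Fin n,
      pd a (pd b g) x = fderiv ℝ (fderiv ℝ g) x (Pi.single a 1) (Pi.single b 1) := by
    intro a b
    unfold pd
    rw [fderiv_clm_apply hDx (differentiableAt_const _)]
    simp
  rw [key, key, hsymm]

variable {n : ℕ} {x : Fin n → ℝ}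

lemma differentiableAt_finset_prod {ι : Type*} [DecidableEq ι] {u : Finset ι} {g : ι → (Fin n → ℝ) → ℝ}
    (h : ∀ i ∈ u, DifferentiableAt ℝ (g i) x) :
    DifferentiableAt ℝ (fun y => ∏ i ∈ u, g i y) x :=
  (HasFDerivAt.finset_prod (fun i hi => (h i hi).hasFDerivAt)).differentiableAt

lemma differentiableAt_det {M : (Fin n → ℝ) → Matrix (Fin n) (Fin n) ℝ}
    (h : ∀ i j, DifferentiableAt ℝ (fun y => M y i j) x) :
    DifferentiableAt ℝ (fun y => (M y).det) x := by
  simp only [Matrix.det_apply, Units.smul_def, zsmul_eq_mul]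
  exact DifferentiableAt.fun_sum fun σ _ =>
    (differentiableAt_const _).mul (differentiableAt_finset_prod fun i _ => h (σ i) i)

lemma differentiableAt_adjugate {M : (Fin n → ℝ) → Matrix (Fin n) (Fin n) ℝ}
    (h : ∀ i j, DifferentiableAt ℝ (fun y => M y i j) x) (i j : Fin n) :
    DifferentiableAt ℝ (fun y => (M y).adjugate i j) x := by
  simp only [Matrix.adjugate_apply]
  apply differentiableAt_det
  intro a b
  by_cases hab : a = j
  · subst hab; simp only [Matrix.updateRow_self]; exact differentiableAt_const _
  · simp only [Matrix.updateRow_ne hab]; exact h a b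

section main
variable {n : ℕ} {f : (Fin n → ℝ) → ℝ} {Ω : Set (Fin n → ℝ)} {x : Fin n → ℝ}
variable (hΩo : IsOpen Ω) (hf : ContDiffOn ℝ (⊤ : ℕ∞) f Ω)
variable (hconv : ∀ x ∈ Ω, (hessMat f x).PosDef) (hx : x ∈ Ω)

include hΩo hf

lemma cd_pd1 (j : Fin n) : ContDiffOn ℝ (⊤ : ℕ∞) (pd j f) Ω := contDiffOn_pd hΩo hf
lemma cd_pd2 (i j : Fin n) : ContDiffOn ℝ (⊤ : ℕ∞) (pd i (pd j f)) Ω :=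
  contDiffOn_pd hΩo (cd_pd1 hΩo hf j)
lemma cd_f3 (i j k : Fin n) : ContDiffOn ℝ (⊤ : ℕ∞) (f3 f i j k) Ω :=
  contDiffOn_pd hΩo (cd_pd2 hΩo hf j k)

include hx

lemma dAt_hess (i j : Fin n) : DifferentiableAt ℝ (fun y => hessMat f y i j) x :=
  differentiableAt_of_contDiffOn hΩo (cd_pd2 hΩo hf i j) hx

lemma dAt_f3 (i j k : Fin n) : DifferentiableAt ℝ (f3 f i j k) x :=
  differentiableAt_of_contDiffOn hΩo (cd_f3 hΩo hf i j k) hx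

lemma pd_hess (i a b : Fin n) : pd i (fun y => hessMat f y a b) x = f3 f i a b x := rfl

omit hΩo hf hx

lemma hessInv_entry (f : (Fin n → ℝ) → ℝ) (y : Fin n → ℝ) (l m : Fin n) :
    hessInv f y l m = ((hessMat f y).det)⁻¹ * (hessMat f y).adjugate l m := by
  rw [hessInv, Matrix.inv_def, Ring.inverse_eq_inv']
  simp [Matrix.smul_apply, smul_eq_mul]

include hΩo hf hconv hx

lemma dAt_hessInv (l m : Fin n) : DifferentiableAt ℝ (fun y => hessInv f y l m) x := by
  have hdet : DifferentiableAt ℝ (fun y => (hessMat f y).det) x :=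
    differentiableAt_det (dAt_hess hΩo hf hx)
  have hne : (hessMat f x).det ≠ 0 := ne_of_gt (hconv x hx).det_pos
  have hadj := differentiableAt_adjugate (dAt_hess hΩo hf hx) l m
  simpa only [← hessInv_entry] using (hdet.fun_inv hne).fun_mul hadj

omit hΩo hf hconv hx

lemma hess_symm (hΩo : IsOpen Ω) (hf : ContDiffOn ℝ (⊤ : ℕ∞) f Ω) (hx : x ∈ Ω) (i j : Fin n) :
    hessMat f x i j = hessMat f x j i := pd_comm hΩo hf hx i j

lemma hessMat_isSymm (hΩo : IsOpen Ω) (hf : ContDiffOn ℝ (⊤ : ℕ∞) f Ω) (hx : x ∈ Ω) :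
    (hessMat f x)ᵀ = hessMat f x := by
  ext i j; exact hess_symm hΩo hf hx j i

lemma hessInv_symm (hΩo : IsOpen Ω) (hf : ContDiffOn ℝ (⊤ : ℕ∞) f Ω) (hx : x ∈ Ω) (i j : Fin n) :
    hessInv f x i j = hessInv f x j i := by
  have h : (hessInv f x)ᵀ = hessInv f x := by
    rw [hessInv, Matrix.transpose_nonsing_inv, hessMat_isSymm hΩo hf hx]
  calc hessInv f x i j = (hessInv f x)ᵀ j i := rfl
    _ = hessInv f x j i := by rw [h]

lemma hessInv_mul_hess (hconv : ∀ x ∈ Ω, (hessMat f x).PosDef) (hx : x ∈ Ω) (a b : Fin n) :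
    ∑ l, hessInv f x a l * hessMat f x l b = if a = b then 1 else 0 := by
  have h : hessInv f x * hessMat f x = 1 :=
    Matrix.nonsing_inv_mul _ (isUnit_iff_ne_zero.2 (ne_of_gt (hconv x hx).det_pos))
  have := congrFun (congrFun h a) b
  simpa [Matrix.mul_apply, Matrix.one_apply] using this

lemma hess_mul_hessInv (hconv : ∀ x ∈ Ω, (hessMat f x).PosDef) (hx : x ∈ Ω) (a b : Fin n) :
    ∑ l, hessMat f x a l * hessInv f x l b = if a = b then 1 else 0 := by
  have h : hessMat f x * hessInv f x = 1 :=
    Matrix.mul_nonsing_inv _ (isUnit_iff_ne_zero.2 (ne_of_gt (hconv x hx).det_pos))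
  have := congrFun (congrFun h a) b
  simpa [Matrix.mul_apply, Matrix.one_apply] using this

end main

section main2
variable {n : ℕ} {f : (Fin n → ℝ) → ℝ} {Ω : Set (Fin n → ℝ)} {x : Fin n → ℝ}
variable (hΩo : IsOpen Ω) (hf : ContDiffOn ℝ (⊤ : ℕ∞) f Ω)
variable (hconv : ∀ x ∈ Ω, (hessMat f x).PosDef) (hx : x ∈ Ω)

lemma pd_const {c : ℝ} {i : Fin n} : pd i (fun _ => c) x = 0 := by
  unfold pd; rw [fderiv_fun_const]; simp

include hΩo hf hconv hx

lemma pd_hessInv_aux (i c d : Fin n) :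
    ∑ m, (f3 f i c m x * hessInv f x m d
      + hessMat f x c m * pd i (fun y => hessInv f y m d) x) = 0 := by
  have hdiffH := dAt_hess hΩo hf hx
  have hdiffI := dAt_hessInv hΩo hf hconv hx
  have h1 : pd i (fun y => ∑ m, hessMat f y c m * hessInv f y m d) x
      = ∑ m, (f3 f i c m x * hessInv f x m d
        + hessMat f x c m * pd i (fun y => hessInv f y m d) x) := by
    rw [pd_sum Finset.univ (fun m y => hessMat f y c m * hessInv f y m d)
      (fun m _ => (hdiffH c m).mul (hdiffI m d))]
    exact Finset.sum_congr rfl fun m _ => by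
      rw [pd_mul (hdiffH c m) (hdiffI m d), pd_hess hΩo hf hx]
  have h2 : pd i (fun y => ∑ m, hessMat f y c m * hessInv f y m d) x = 0 := by
    rw [pd_congr_nhds (h := fun _ => if c = d then (1:ℝ) else 0)]
    · exact pd_const
    · filter_upwards [hΩo.mem_nhds hx] with y hy using hess_mul_hessInv hconv hy c d
  rw [← h1, h2]

lemma pd_hessInv (i a b : Fin n) :
    pd i (fun y => hessInv f y a b) x
      = -∑ l, ∑ m, hessInv f x a l * f3 f i l m x * hessInv f x m b := by
  have key : ∀ l, ∑ m, hessMat f x l m * pd i (fun y => hessInv f y m b) x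
      = -∑ m, f3 f i l m x * hessInv f x m b := by
    intro l
    have h := pd_hessInv_aux hΩo hf hconv hx i l b
    rw [Finset.sum_add_distrib] at h
    linarith
  calc pd i (fun y => hessInv f y a b) x
      = ∑ m, (if a = m then (1:ℝ) else 0) * pd i (fun y => hessInv f y m b) x := by
        simp
    _ = ∑ m, (∑ l, hessInv f x a l * hessMat f x l m) * pd i (fun y => hessInv f y m b) x := by
        exact Finset.sum_congr rfl fun m _ => by rw [hessInv_mul_hess hconv hx a m]
    _ = ∑ l, hessInv f x a l * ∑ m, hessMat f x l m * pd i (fun y => hessInv f y m b) x := by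
        simp only [Finset.sum_mul, Finset.mul_sum, mul_assoc]
        exact Finset.sum_comm
    _ = ∑ l, hessInv f x a l * -(∑ m, f3 f i l m x * hessInv f x m b) := by
        exact Finset.sum_congr rfl fun l _ => by rw [key l]
    _ = -∑ l, ∑ m, hessInv f x a l * f3 f i l m x * hessInv f x m b := by
        rw [← Finset.sum_neg_distrib]
        exact Finset.sum_congr rfl fun l _ => by
          simp only [mul_neg, Finset.mul_sum, mul_assoc]

end main2

section main3
variable {n : ℕ} {f : (Fin n → ℝ) → ℝ} {Ω : Set (Fin n → ℝ)} {x : Fin n → ℝ}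
variable (hΩo : IsOpen Ω) (hf : ContDiffOn ℝ (⊤ : ℕ∞) f Ω)
variable (hconv : ∀ x ∈ Ω, (hessMat f x).PosDef) (hx : x ∈ Ω)

include hΩo hf hx

lemma f3_symm12 (i j k : Fin n) : f3 f i j k x = f3 f j i k x :=
  pd_comm hΩo (cd_pd1 hΩo hf k) hx i j

lemma f3_symm23 (i j k : Fin n) : f3 f i j k x = f3 f i k j x := by
  unfold f3
  apply pd_congr_nhds
  filter_upwards [hΩo.mem_nhds hx] with y hy
  exact pd_comm hΩo hf hy j k

lemma f3_symm13 (i j k : Fin n) : f3 f i j k x = f3 f k j i x := by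
  rw [f3_symm12 hΩo hf hx, f3_symm23 hΩo hf hx, f3_symm12 hΩo hf hx]

lemma d4_symm (i j k m : Fin n) : pd i (f3 f j k m) x = pd j (f3 f i k m) x :=
  pd_comm hΩo (cd_pd2 hΩo hf k m) hx i j

include hconv

lemma pd_Gamma (i l j k : Fin n) :
    pd i (Gamma f l j k) x = (1 / 2) *
      ∑ m, ((-∑ a, ∑ b, hessInv f x l a * f3 f i a b x * hessInv f x b m) * f3 f j k m x
        + hessInv f x l m * pd i (f3 f j k m) x) := by
  have hdI := dAt_hessInv hΩo hf hconv hx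
  have hd3 := dAt_f3 hΩo hf hx
  unfold _root_.Gamma
  rw [pd_const_mul _ (DifferentiableAt.fun_sum fun m _ => (hdI l m).fun_mul (hd3 j k m))]
  rw [pd_sum Finset.univ _ (fun m _ => (hdI l m).fun_mul (hd3 j k m))]
  congr 1
  refine Finset.sum_congr rfl fun m _ => ?_
  rw [pd_mul (hdI l m) (hd3 j k m), pd_hessInv hΩo hf hconv hx i l m]

end main3

section main4
variable {n : ℕ} {f : (Fin n → ℝ) → ℝ} {Ω : Set (Fin n → ℝ)} {x : Fin n → ℝ}
variable (hΩo : IsOpen Ω) (hf : ContDiffOn ℝ (⊤ : ℕ∞) f Ω)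
variable (hconv : ∀ x ∈ Ω, (hessMat f x).PosDef) (hx : x ∈ Ω)

lemma sum_rot3 {F : Fin n → Fin n → Fin n → ℝ} :
    ∑ m, ∑ a, ∑ b, F m a b = ∑ a, ∑ b, ∑ m, F m a b := by
  rw [Finset.sum_comm]
  exact Finset.sum_congr rfl fun a _ => Finset.sum_comm

include hΩo hf hconv hx

lemma hS_lemma (l k i' j' : Fin n) :
    (∑ m, (-∑ a, ∑ b, hessInv f x l a * f3 f i' a b x * hessInv f x b m) * f3 f j' k m x)
      = -∑ a, ∑ b, ∑ m, hessInv f x l a * hessInv f x b m *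
          (f3 f i' a b x * f3 f j' k m x) := by
  have step1 : (∑ m, (-∑ a, ∑ b, hessInv f x l a * f3 f i' a b x * hessInv f x b m)
        * f3 f j' k m x)
      = -∑ m, ∑ a, ∑ b, hessInv f x l a * hessInv f x b m *
          (f3 f i' a b x * f3 f j' k m x) := by
    rw [← Finset.sum_neg_distrib]
    refine Finset.sum_congr rfl fun m _ => ?_
    rw [neg_mul, neg_inj, Finset.sum_mul]
    refine Finset.sum_congr rfl fun a _ => ?_
    rw [Finset.sum_mul]
    exact Finset.sum_congr rfl fun b _ => by ring
  rw [step1]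
  exact congrArg Neg.neg sum_rot3

lemma hG_lemma (l k i' j' : Fin n) :
    (∑ m, Gamma f l i' m x * Gamma f m j' k x)
      = (1/4) * ∑ a, ∑ b, ∑ m, hessInv f x l a * hessInv f x b m *
          (f3 f i' a b x * f3 f j' k m x) := by
  have step1 : (∑ m, Gamma f l i' m x * Gamma f m j' k x)
      = ∑ m, ∑ a, ∑ b, (1/4) * (hessInv f x l a * hessInv f x m b *
          (f3 f i' m a x * f3 f j' k b x)) := by
    refine Finset.sum_congr rfl fun m _ => ?_
    show (1 / 2 * ∑ a, hessInv f x l a * f3 f i' m a x) *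
        (1 / 2 * ∑ b, hessInv f x m b * f3 f j' k b x) = _
    rw [mul_mul_mul_comm, Finset.sum_mul_sum]
    rw [Finset.mul_sum]
    refine Finset.sum_congr rfl fun a _ => ?_
    rw [Finset.mul_sum]
    exact Finset.sum_congr rfl fun b _ => by ring
  rw [step1, Finset.sum_comm, Finset.mul_sum]
  refine Finset.sum_congr rfl fun a _ => ?_
  rw [Finset.mul_sum]
  refine Finset.sum_congr rfl fun b _ => ?_
  rw [Finset.mul_sum]
  refine Finset.sum_congr rfl fun m _ => ?_
  rw [f3_symm23 hΩo hf hx i' b a, hessInv_symm hΩo hf hx b m]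

lemma riemUp_eq (l k i j : Fin n) :
    RiemUp f l k i j x = -(1/4) * ∑ a, ∑ b, ∑ m,
      hessInv f x l a * hessInv f x b m *
        (f3 f i a b x * f3 f j k m x - f3 f j a b x * f3 f i k m x) := by
  have hD : (∑ m, hessInv f x l m * pd i (f3 f j k m) x)
      = ∑ m, hessInv f x l m * pd j (f3 f i k m) x :=
    Finset.sum_congr rfl fun m _ => by rw [d4_symm hΩo hf hx i j k m]
  have hRHS : (∑ a, ∑ b, ∑ m, hessInv f x l a * hessInv f x b m *
        (f3 f i a b x * f3 f j k m x - f3 f j a b x * f3 f i k m x))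
      = (∑ a, ∑ b, ∑ m, hessInv f x l a * hessInv f x b m *
          (f3 f i a b x * f3 f j k m x))
        - (∑ a, ∑ b, ∑ m, hessInv f x l a * hessInv f x b m *
          (f3 f j a b x * f3 f i k m x)) := by
    simp only [mul_sub, Finset.sum_sub_distrib]
  show pd i (Gamma f l j k) x - pd j (Gamma f l i k) x +
      ∑ m, (Gamma f l i m x * Gamma f m j k x - Gamma f l j m x * Gamma f m i k x) = _
  rw [Finset.sum_sub_distrib, hG_lemma hΩo hf hconv hx l k i j, hG_lemma hΩo hf hconv hx l k j i,
    pd_Gamma hΩo hf hconv hx i l j k, pd_Gamma hΩo hf hconv hx j l i k]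
  simp only [Finset.sum_add_distrib, mul_add]
  rw [hS_lemma hΩo hf hconv hx l k i j, hS_lemma hΩo hf hconv hx l k j i, hD, hRHS]
  ring

end main4

section sums
variable {n : ℕ}

lemma sum6_prod (F : Fin n → Fin n → Fin n → Fin n → Fin n → Fin n → ℝ) :
    ∑ p : Fin n × Fin n × Fin n × Fin n × Fin n × Fin n,
        F p.1 p.2.1 p.2.2.1 p.2.2.2.1 p.2.2.2.2.1 p.2.2.2.2.2
      = ∑ a, ∑ b, ∑ c, ∑ d, ∑ e, ∑ g, F a b c d e g := by
  simp only [Fintype.sum_prod_type]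

lemma sum6_perm_T1 (F : Fin n → Fin n → Fin n → Fin n → Fin n → Fin n → ℝ) :
    (∑ a, ∑ b, ∑ c, ∑ d, ∑ e, ∑ g, F a b c d e g)
      = ∑ a, ∑ b, ∑ c, ∑ d, ∑ e, ∑ g, F e g c d a b := by
  rw [← sum6_prod F, ← sum6_prod (fun a b c d e g => F e g c d a b)]
  exact Fintype.sum_equiv
    ⟨fun p => ⟨p.2.2.2.2.1, p.2.2.2.2.2, p.2.2.1, p.2.2.2.1, p.1, p.2.1⟩,
     fun p => ⟨p.2.2.2.2.1, p.2.2.2.2.2, p.2.2.1, p.2.2.2.1, p.1, p.2.1⟩,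
     fun _ => rfl, fun _ => rfl⟩ _ _ (fun p => rfl)

lemma sum6_perm_T2 (F : Fin n → Fin n → Fin n → Fin n → Fin n → Fin n → ℝ) :
    (∑ a, ∑ b, ∑ c, ∑ d, ∑ e, ∑ g, F a b c d e g)
      = ∑ a, ∑ b, ∑ c, ∑ d, ∑ e, ∑ g, F d c a b e g := by
  rw [← sum6_prod F, ← sum6_prod (fun a b c d e g => F d c a b e g)]
  exact Fintype.sum_equiv
    ⟨fun p => ⟨p.2.2.1, p.2.2.2.1, p.2.1, p.1, p.2.2.2.2.1, p.2.2.2.2.2⟩,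
     fun p => ⟨p.2.2.2.1, p.2.2.1, p.1, p.2.1, p.2.2.2.2.1, p.2.2.2.2.2⟩,
     fun _ => rfl, fun _ => rfl⟩ _ _ (fun p => rfl)

lemma sum4_prod (F : Fin n → Fin n → Fin n → Fin n → ℝ) :
    ∑ p : Fin n × Fin n × Fin n × Fin n, F p.1 p.2.1 p.2.2.1 p.2.2.2
      = ∑ a, ∑ b, ∑ c, ∑ d, F a b c d := by
  simp only [Fintype.sum_prod_type]

lemma sum4_perm (F : Fin n → Fin n → Fin n → Fin n → ℝ) :
    (∑ a, ∑ b, ∑ c, ∑ d, F a b c d) = ∑ a, ∑ b, ∑ c, ∑ d, F c d a b := by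
  rw [← sum4_prod F, ← sum4_prod (fun a b c d => F c d a b)]
  exact Fintype.sum_equiv
    ⟨fun p => ⟨p.2.2.1, p.2.2.2, p.1, p.2.1⟩, fun p => ⟨p.2.2.1, p.2.2.2, p.1, p.2.1⟩,
     fun _ => rfl, fun _ => rfl⟩ _ _ (fun p => rfl)

end sums

/-- `h_c = Σ_{i,a} f^{ia} f_{iac}`. -/
def hvec {n : ℕ} (f : (Fin n → ℝ) → ℝ) (x : Fin n → ℝ) (c : Fin n) : ℝ :=
  ∑ i, ∑ a, hessInv f x i a * f3 f i a c x

section main5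
variable {n : ℕ} {f : (Fin n → ℝ) → ℝ} {Ω : Set (Fin n → ℝ)} {x : Fin n → ℝ}
variable (hΩo : IsOpen Ω) (hf : ContDiffOn ℝ (⊤ : ℕ∞) f Ω)
variable (hconv : ∀ x ∈ Ω, (hessMat f x).PosDef) (hx : x ∈ Ω)

include hΩo hf hconv hx

/-- Scalar curvature as `-(1/4) (U1 - U2)`. -/
lemma scal_eq : ScalC f x = -(1/4) *
    ((∑ j, ∑ k, ∑ i, ∑ a, ∑ b, ∑ m, hessInv f x j k * hessInv f x i a * hessInv f x b m *
        (f3 f i a b x * f3 f j k m x))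
    - (∑ j, ∑ k, ∑ i, ∑ a, ∑ b, ∑ m, hessInv f x j k * hessInv f x i a * hessInv f x b m *
        (f3 f j a b x * f3 f i k m x))) := by
  have step1 : ScalC f x = ∑ j, ∑ k, ∑ i, ∑ a, ∑ b, ∑ m,
      -(1/4) * (hessInv f x j k * hessInv f x i a * hessInv f x b m *
        (f3 f i a b x * f3 f j k m x - f3 f j a b x * f3 f i k m x)) := by
    refine Finset.sum_congr rfl fun j _ => ?_
    refine Finset.sum_congr rfl fun k _ => ?_
    show hessInv f x j k * ∑ i, RiemUp f i k i j x = _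
    rw [Finset.mul_sum]
    refine Finset.sum_congr rfl fun i _ => ?_
    rw [riemUp_eq hΩo hf hconv hx i k i j, Finset.mul_sum, Finset.mul_sum]
    refine Finset.sum_congr rfl fun a _ => ?_
    rw [Finset.mul_sum, Finset.mul_sum]
    refine Finset.sum_congr rfl fun b _ => ?_
    rw [Finset.mul_sum, Finset.mul_sum]
    exact Finset.sum_congr rfl fun m _ => by ring
  rw [step1]
  simp only [mul_sub, Finset.sum_sub_distrib, Finset.mul_sum]

end main5

section main6
variable {n : ℕ} {f : (Fin n → ℝ) → ℝ} {Ω : Set (Fin n → ℝ)} {x : Fin n → ℝ}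
variable (hΩo : IsOpen Ω) (hf : ContDiffOn ℝ (⊤ : ℕ∞) f Ω)
variable (hconv : ∀ x ∈ Ω, (hessMat f x).PosDef) (hx : x ∈ Ω)

include hΩo hf hconv hx

lemma U1_eq :
    (∑ j, ∑ k, ∑ i, ∑ a, ∑ b, ∑ m, hessInv f x j k * hessInv f x i a * hessInv f x b m *
        (f3 f i a b x * f3 f j k m x))
      = ∑ a, ∑ b, hessInv f x a b * hvec f x a * hvec f x b := by
  rw [sum6_perm_T1 (fun j k i a b m => hessInv f x j k * hessInv f x i a * hessInv f x b m *
        (f3 f i a b x * f3 f j k m x))]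
  refine Finset.sum_congr rfl fun b _ => ?_
  refine Finset.sum_congr rfl fun m _ => ?_
  have inner : ∀ i a : Fin n,
      (∑ j, ∑ k, hessInv f x j k * hessInv f x i a * hessInv f x b m *
        (f3 f i a b x * f3 f j k m x))
      = (hessInv f x i a * f3 f i a b x) * (hessInv f x b m * hvec f x m) := by
    intro i a
    simp only [hvec, Finset.mul_sum]
    refine Finset.sum_congr rfl fun j _ => ?_
    exact Finset.sum_congr rfl fun k _ => by ring
  calc (∑ i, ∑ a, ∑ j, ∑ k, hessInv f x j k * hessInv f x i a * hessInv f x b m *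
        (f3 f i a b x * f3 f j k m x))
      = ∑ i, ∑ a, (hessInv f x i a * f3 f i a b x) * (hessInv f x b m * hvec f x m) := by
        refine Finset.sum_congr rfl fun i _ => ?_
        exact Finset.sum_congr rfl fun a _ => inner i a
    _ = (∑ i, ∑ a, hessInv f x i a * f3 f i a b x) * (hessInv f x b m * hvec f x m) := by
        simp only [Finset.sum_mul]
    _ = hessInv f x b m * hvec f x b * hvec f x m := by
        show (hvec f x b) * (hessInv f x b m * hvec f x m) = _
        ring

lemma tcheb_eq (l : Fin n) :
    Tcheb f l x = -(1 / (2 * (n : ℝ))) * ∑ k, hessInv f x k l * hvec f x k := by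
  show -(1 / (2 * (n : ℝ))) *
      (∑ k, ∑ i, ∑ j, hessInv f x k l * hessInv f x i j * f3 f i j k x) = _
  congr 1
  refine Finset.sum_congr rfl fun k _ => ?_
  simp only [hvec, Finset.mul_sum]
  refine Finset.sum_congr rfl fun i _ => ?_
  exact Finset.sum_congr rfl fun j _ => by ring

lemma tnorm_eq :
    TnormSq f x = (1 / (2 * (n : ℝ)))^2 *
      ∑ a, ∑ b, hessInv f x a b * hvec f x a * hvec f x b := by
  have step1 : TnormSq f x = ∑ k, ∑ l, ∑ a, ∑ b, (1 / (2 * (n : ℝ)))^2 *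
      (hessMat f x k l * ((hessInv f x a k * hvec f x a) * (hessInv f x b l * hvec f x b))) := by
    refine Finset.sum_congr rfl fun k _ => ?_
    refine Finset.sum_congr rfl fun l _ => ?_
    rw [tcheb_eq hΩo hf hconv hx k, tcheb_eq hΩo hf hconv hx l]
    calc hessMat f x k l * (-(1 / (2 * (n : ℝ))) * ∑ a, hessInv f x a k * hvec f x a) *
          (-(1 / (2 * (n : ℝ))) * ∑ b, hessInv f x b l * hvec f x b)
        = (1 / (2 * (n : ℝ)))^2 * (hessMat f x k l *
            ((∑ a, hessInv f x a k * hvec f x a) * (∑ b, hessInv f x b l * hvec f x b))) := by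
          ring
      _ = (1 / (2 * (n : ℝ)))^2 * (hessMat f x k l *
            (∑ a, ∑ b, (hessInv f x a k * hvec f x a) * (hessInv f x b l * hvec f x b))) := by
          rw [Finset.sum_mul_sum]
      _ = _ := by simp only [Finset.mul_sum]
  rw [step1, sum4_perm (fun k l a b => (1 / (2 * (n : ℝ)))^2 *
      (hessMat f x k l * ((hessInv f x a k * hvec f x a) * (hessInv f x b l * hvec f x b))))]
  rw [Finset.mul_sum]
  refine Finset.sum_congr rfl fun a _ => ?_
  rw [Finset.mul_sum]
  refine Finset.sum_congr rfl fun b _ => ?_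
  calc (∑ k, ∑ l, (1 / (2 * (n : ℝ)))^2 *
        (hessMat f x k l * ((hessInv f x a k * hvec f x a) * (hessInv f x b l * hvec f x b))))
      = ∑ k, ((1 / (2 * (n : ℝ)))^2 * (hessInv f x a k * hvec f x a * hvec f x b)) *
          (∑ l, hessMat f x k l * hessInv f x l b) := by
        refine Finset.sum_congr rfl fun k _ => ?_
        rw [Finset.mul_sum]
        refine Finset.sum_congr rfl fun l _ => ?_
        rw [hessInv_symm hΩo hf hx b l]
        ring
    _ = ∑ k, ((1 / (2 * (n : ℝ)))^2 * (hessInv f x a k * hvec f x a * hvec f x b)) *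
          (if k = b then 1 else 0) := by
        refine Finset.sum_congr rfl fun k _ => ?_
        rw [hess_mul_hessInv hconv hx k b]
    _ = (1 / (2 * (n : ℝ)))^2 * (hessInv f x a b * hvec f x a * hvec f x b) := by
        simp [mul_ite, mul_one, mul_zero, Finset.sum_ite_eq']
    _ = (1 / (2 * (n : ℝ)))^2 * (hessInv f x a b * hvec f x a * hvec f x b) := rfl

lemma pick_eq :
    PickJ f x = (1 / (4 * (n : ℝ) * ((n : ℝ) - 1))) *
      ∑ j, ∑ k, ∑ i, ∑ a, ∑ b, ∑ m, hessInv f x j k * hessInv f x i a * hessInv f x b m *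
        (f3 f j a b x * f3 f i k m x) := by
  show (1 / (4 * (n : ℝ) * ((n : ℝ) - 1))) * _ = _
  congr 1
  rw [sum6_perm_T2 (fun i l j p k q => hessInv f x i l * hessInv f x j p * hessInv f x k q *
      f3 f i j k x * f3 f l p q x)]
  refine Finset.sum_congr rfl fun j _ => ?_
  refine Finset.sum_congr rfl fun k _ => ?_
  refine Finset.sum_congr rfl fun i _ => ?_
  refine Finset.sum_congr rfl fun a _ => ?_
  refine Finset.sum_congr rfl fun b _ => ?_
  refine Finset.sum_congr rfl fun m _ => ?_
  rw [hessInv_symm hΩo hf hx a i, f3_symm12 hΩo hf hx a j b]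
  ring

end main6

/-- the scalar curvature identity `R = n(n-1)J - n²|T|²`. -/
theorem stmt12 {n : ℕ} (hn : 2 ≤ n) (Ω : Set (Fin n → ℝ)) (hΩo : IsOpen Ω)
    (f : (Fin n → ℝ) → ℝ) (hf : ContDiffOn ℝ (⊤ : ℕ∞) f Ω)
    (hconv : ∀ x ∈ Ω, (hessMat f x).PosDef) :
    ∀ x ∈ Ω, ScalC f x =
      (n : ℝ) * ((n : ℝ) - 1) * PickJ f x - (n : ℝ) ^ 2 * TnormSq f x := by
  intro x hx
  have hn0 : (n : ℝ) ≠ 0 := Nat.cast_ne_zero.2 (by omega)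
  have hn1 : (n : ℝ) - 1 ≠ 0 := by
    have h2 : (2 : ℝ) ≤ (n : ℝ) := by exact_mod_cast hn
    linarith
  rw [scal_eq hΩo hf hconv hx, U1_eq hΩo hf hconv hx, tnorm_eq hΩo hf hconv hx,
    pick_eq hΩo hf hconv hx]
  set S := ∑ a, ∑ b, hessInv f x a b * hvec f x a * hvec f x b with hS
  set U := ∑ j, ∑ k, ∑ i, ∑ a, ∑ b, ∑ m,
      hessInv f x j k * hessInv f x i a * hessInv f x b m *
        (f3 f j a b x * f3 f i k m x) with hU
  field_simp
  ring

end
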